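/- arXiv:1009.5511 — 3 statements merged into one kernel-verified Lean document; each statement's English description precedes it below -/
import Mathlib

section
/- Let f : (0,∞) → (0,∞) be continuous and strictly increasing with lim_{r→0+} f(r) = 0 and lim_{r→∞} f(r) = ∞, and let f^{−1} : (0,∞) → (0,∞) be its inverse. Assume: (i) liminf_{r→∞} f(r)/log r > 0; (ii) liminf_{r→0+} f(r)·|log r| < ∞; (iii) limsup_{s→0+} f^{−1}(2s)/f^{−1}(s) < ∞. Then there exist constants C > 0 and t₀ > 0 such that for every t ≥ t₀: ∫₀^∞ r^{−1/2} e^{−t f(r)} dr ≤ C √(f^{−1}(1/t)). -/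
open MeasureTheory Real Set Filter
open scoped RealInnerProductSpace ENNReal

/-- Total variation distance (total variation norm of the signed measure `μ - ν`)
for finite measures, valued in `ℝ≥0∞`. -/
noncomputable def tvDist {E : Type*} [MeasurableSpace E] (μ ν : Measure E) : ℝ≥0∞ :=
  (⨆ (A : Set E) (_ : MeasurableSet A), μ A - ν A) +
    (⨆ (A : Set E) (_ : MeasurableSet A), ν A - μ A)

/-!
Write `ρ = g (1/t)`. Condition (iii) makes `g = f⁻¹` doubling near `0`, which iterates to
`g s' ≤ (2 s'/s)^β g s` for `0 < s ≤ s' ≤ s₁`. Taking `s = 1/t` and `s' = f r` turns this into the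
pointwise bound `exp (-t f r) ≤ e · exp (-(r / (2^β ρ))^(1/β))` for `r ≤ g s₁`, and against
`r^(-1/2)` the right-hand side integrates, by a Gamma integral, to a constant times `√ρ`.
For `r > g s₁` we have `f r ≥ s₁` and, by (i), `f r ≥ b log r`, so that part of the integral is
`O(e^{-s₁ t})`; taking `s = 1/t`, `s' = s₁` instead gives `ρ ≳ t^{-β}`, so it is also `O(√ρ)`.
-/

lemma StrictMonoOn.monotoneOn_of_rightInvOn {α β : Type*} [LinearOrder α] [Preorder β]
    {f : α → β} {g : β → α} {s : Set α} {t : Set β} (hf : StrictMonoOn f s)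
    (hg : MapsTo g t s) (hfg : RightInvOn g f t) : MonotoneOn g t := by
  intro x hx y hy hxy
  rwa [← hf.le_iff_le (hg hx) (hg hy), hfg hx, hfg hy]

lemma lintegral_Ioi_rpow_of_lt {p a : ℝ} (hp : p < -1) (ha : 0 < a) :
    ∫⁻ r in Ioi a, ENNReal.ofReal (r ^ p) = ENNReal.ofReal (-a ^ (p + 1) / (p + 1)) := by
  rw [← ofReal_integral_eq_lintegral_ofReal (integrableOn_Ioi_rpow_of_lt hp ha)
    ((ae_restrict_iff' measurableSet_Ioi).2 (ae_of_all _ fun r hr ↦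
      rpow_nonneg (ha.trans hr).le _)), integral_Ioi_rpow_of_lt hp ha]

lemma lintegral_rpow_mul_exp_neg_div_rpow {p q c : ℝ} (hp : 0 < p) (hq : -1 < q) (hc : 0 < c) :
    ∫⁻ x in Ioi 0, ENNReal.ofReal (x ^ q * exp (-(x / c) ^ p)) =
      ENNReal.ofReal (c ^ (q + 1) * (1 / p * Gamma ((q + 1) / p))) := by
  have hb : 0 < c ^ (-p) := rpow_pos_of_pos hc _
  have hscale : ∀ x ∈ Ioi (0 : ℝ), ENNReal.ofReal (x ^ q * exp (-(x / c) ^ p)) =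
      ENNReal.ofReal (x ^ q * exp (-c ^ (-p) * x ^ p)) := fun x hx ↦ by
    rw [div_rpow (le_of_lt hx) hc.le, rpow_neg hc.le, neg_mul, div_eq_inv_mul]
  rw [setLIntegral_congr_fun measurableSet_Ioi hscale,
    ← ofReal_integral_eq_lintegral_ofReal (integrableOn_rpow_mul_exp_neg_mul_rpow hq hp hb)
      ((ae_restrict_iff' measurableSet_Ioi).2 (ae_of_all _ fun x hx ↦ by
        have := rpow_pos_of_pos hx q; positivity)),
    integral_rpow_mul_exp_neg_mul_rpow hp hq hb, ← rpow_mul hc.le, mul_assoc]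
  congr 3
  field_simp

lemma exists_doubling_of_eventually_div_le {g : ℝ → ℝ} {K : ℝ} (hg0 : ∀ s, 0 < s → 0 < g s)
    (hK : ∀ᶠ s in nhdsWithin 0 (Ioi 0), g (2 * s) / g s ≤ K) :
    ∃ β : ℕ, 0 < β ∧ ∃ s₁ > 0, ∀ s, 0 < s → s ≤ s₁ → g (2 * s) ≤ 2 ^ β * g s := by
  obtain ⟨ε, hε, hεK⟩ := (nhdsGT_basis (0 : ℝ)).eventually_iff.mp hK
  obtain ⟨β, hβK⟩ := pow_unbounded_of_one_lt K one_lt_two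
  refine ⟨β + 1, β.succ_pos, ε / 2, half_pos hε, fun s hs hsε ↦ ?_⟩
  calc g (2 * s) ≤ K * g s :=
        (div_le_iff₀ (hg0 s hs)).1 (hεK ⟨hs, hsε.trans_lt (half_lt_self hε)⟩)
    _ ≤ 2 ^ (β + 1) * g s := by
      gcongr
      · exact (hg0 s hs).le
      · exact hβK.le.trans (pow_le_pow_right₀ one_le_two β.le_succ)

lemma le_two_mul_div_pow_mul_of_doubling {g : ℝ → ℝ} {s₁ : ℝ} {β : ℕ}
    (hg : MonotoneOn g (Ioi 0)) (hg0 : ∀ s, 0 < s → 0 ≤ g s)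
    (hd : ∀ s, 0 < s → s ≤ s₁ → g (2 * s) ≤ 2 ^ β * g s)
    {s s' : ℝ} (hs : 0 < s) (hss' : s ≤ s') (hs' : s' ≤ s₁) :
    g s' ≤ (2 * s' / s) ^ β * g s := by
  obtain ⟨n, hn⟩ := pow_unbounded_of_one_lt (s' / s) one_lt_two
  induction n generalizing s' with
  | zero =>
    rw [pow_zero, div_lt_one hs] at hn
    exact absurd hss' (not_le.mpr hn)
  | succ n ih =>
    rcases lt_or_ge s' (2 * s) with h | h
    · calc g s' ≤ g (2 * s) := hg (hs.trans_le hss') (by simp; positivity) h.le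
        _ ≤ 2 ^ β * g s := hd s hs (hss'.trans hs')
        _ ≤ (2 * s' / s) ^ β * g s := by
          gcongr
          · exact hg0 s hs
          · rw [le_div_iff₀ hs]; linarith
    · have hrec := ih (s' := s' / 2) (by linarith) (by linarith) (by
        rw [div_lt_iff₀ hs]
        rw [div_lt_iff₀ hs, pow_succ] at hn
        linarith)
      calc g s' = g (2 * (s' / 2)) := by ring_nf
        _ ≤ 2 ^ β * g (s' / 2) := hd _ (by linarith) (by linarith)
        _ ≤ 2 ^ β * ((2 * (s' / 2) / s) ^ β * g s) := by gcongr
        _ = (2 * s' / s) ^ β * g s := by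
          rw [← mul_assoc, ← mul_pow]; congr 2; field_simp

lemma eventually_le_pow_mul_of_doubling {g : ℝ → ℝ} {s₁ : ℝ} {β : ℕ}
    (hg : MonotoneOn g (Ioi 0)) (hg0 : ∀ s, 0 < s → 0 ≤ g s)
    (hd : ∀ s, 0 < s → s ≤ s₁ → g (2 * s) ≤ 2 ^ β * g s) (hs₁ : 0 < s₁) :
    ∀ᶠ t in atTop, g s₁ / (2 * s₁) ^ β ≤ t ^ β * g (1 / t) := by
  filter_upwards [eventually_gt_atTop (1 / s₁)] with t ht
  have ht0 : 0 < t := (one_div_pos.2 hs₁).trans ht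
  rw [div_le_iff₀ (by positivity)]
  calc g s₁ ≤ (2 * s₁ / (1 / t)) ^ β * g (1 / t) :=
        le_two_mul_div_pow_mul_of_doubling hg hg0 hd (one_div_pos.2 ht0)
          ((one_div_le hs₁ ht0).1 ht.le) le_rfl
    _ = t ^ β * g (1 / t) * (2 * s₁) ^ β := by
      rw [div_div_eq_mul_div, div_one, mul_pow, mul_pow]; ring

lemma div_rpow_inv_le_mul_add_one_of_doubling {f g : ℝ → ℝ} {s₁ t r : ℝ} {β : ℕ} (hβ : 0 < β)
    (hg : MonotoneOn g (Ioi 0)) (hg0 : ∀ s, 0 < s → 0 < g s)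
    (hd : ∀ s, 0 < s → s ≤ s₁ → g (2 * s) ≤ 2 ^ β * g s) (ht : 0 < t)
    (hfr : f r ∈ Ioc 0 s₁) (hgf : g (f r) = r) :
    (r / (2 ^ β * g (1 / t))) ^ (β⁻¹ : ℝ) ≤ t * f r + 1 := by
  have ht' : (0 : ℝ) < 1 / t := one_div_pos.2 ht
  have hρ := hg0 _ ht'
  have hr : 0 < r := hgf ▸ hg0 _ hfr.1
  have htf : 0 < t * f r := mul_pos ht hfr.1
  rcases lt_or_ge (f r) (1 / t) with h | h
  · have hrρ : r ≤ g (1 / t) := hgf ▸ hg hfr.1 ht' h.le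
    calc (r / (2 ^ β * g (1 / t))) ^ (β⁻¹ : ℝ) ≤ 1 := by
          refine rpow_le_one (by positivity) ((div_le_one (by positivity)).2 ?_) (by positivity)
          nlinarith [one_le_pow₀ (M₀ := ℝ) one_le_two (n := β)]
      _ ≤ t * f r + 1 := by linarith
  · have hdoub := le_two_mul_div_pow_mul_of_doubling hg (fun s hs ↦ (hg0 s hs).le) hd ht' h hfr.2
    rw [hgf, div_div_eq_mul_div, div_one, show 2 * f r * t = 2 * (t * f r) by ring,
      mul_pow] at hdoub
    have hle : r / (2 ^ β * g (1 / t)) ≤ (t * f r) ^ β := by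
      rw [div_le_iff₀ (by positivity)]; linarith
    calc (r / (2 ^ β * g (1 / t))) ^ (β⁻¹ : ℝ) ≤ ((t * f r) ^ β) ^ (β⁻¹ : ℝ) :=
          rpow_le_rpow (by positivity) hle (by positivity)
      _ = t * f r := pow_rpow_inv_natCast htf.le hβ.ne'
      _ ≤ t * f r + 1 := by linarith

lemma lintegral_Ioc_rpow_mul_exp_neg_le_of_doubling {f g : ℝ → ℝ} {s₁ t : ℝ} {β : ℕ} (hβ : 0 < β)
    (hf : StrictMonoOn f (Ioi 0)) (hpos : ∀ r, 0 < r → 0 < f r) (hg : MonotoneOn g (Ioi 0))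
    (hfg : ∀ s, 0 < s → 0 < g s ∧ f (g s) = s) (hgf : ∀ r, 0 < r → g (f r) = r)
    (hd : ∀ s, 0 < s → s ≤ s₁ → g (2 * s) ≤ 2 ^ β * g s) (hs₁ : 0 < s₁) (ht : 0 < t) :
    ∫⁻ r in Ioc 0 (g s₁), ENNReal.ofReal (r ^ (-(1 / 2) : ℝ) * exp (-(t * f r))) ≤
      ENNReal.ofReal (exp 1 * √(2 ^ β) * (β * Gamma (β / 2)) * √(g (1 / t))) := by
  set c := 2 ^ β * g (1 / t)
  have hc : 0 < c := mul_pos (by positivity) (hfg _ (one_div_pos.2 ht)).1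
  have hpt : ∀ r ∈ Ioc 0 (g s₁), ENNReal.ofReal (r ^ (-(1 / 2) : ℝ) * exp (-(t * f r))) ≤
      ENNReal.ofReal (exp 1) *
        ENNReal.ofReal (r ^ (-(1 / 2) : ℝ) * exp (-(r / c) ^ (β⁻¹ : ℝ))) := by
    intro r ⟨hr, hrs₁⟩
    have hfr : f r ≤ s₁ := (hfg s₁ hs₁).2 ▸ hf.monotoneOn hr (hfg s₁ hs₁).1 hrs₁
    have key := div_rpow_inv_le_mul_add_one_of_doubling hβ hg (fun s hs ↦ (hfg s hs).1) hd ht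
      ⟨hpos r hr, hfr⟩ (hgf r hr)
    rw [← ENNReal.ofReal_mul (exp_pos 1).le]
    apply ENNReal.ofReal_le_ofReal
    calc r ^ (-(1 / 2) : ℝ) * exp (-(t * f r))
        ≤ r ^ (-(1 / 2) : ℝ) * exp (1 + -(r / c) ^ (β⁻¹ : ℝ)) := by gcongr; linarith
      _ = _ := by rw [exp_add]; ring
  calc _ ≤ ∫⁻ r in Ioc 0 (g s₁),
        ENNReal.ofReal (exp 1) * ENNReal.ofReal (r ^ (-(1 / 2) : ℝ) * exp (-(r / c) ^ (β⁻¹ : ℝ))) :=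
        setLIntegral_mono' measurableSet_Ioc hpt
    _ ≤ ∫⁻ r in Ioi 0,
        ENNReal.ofReal (exp 1) * ENNReal.ofReal (r ^ (-(1 / 2) : ℝ) * exp (-(r / c) ^ (β⁻¹ : ℝ))) :=
        lintegral_mono_set Ioc_subset_Ioi_self
    _ = _ := by
        rw [lintegral_const_mul' _ _ ENNReal.ofReal_ne_top,
          lintegral_rpow_mul_exp_neg_div_rpow (by positivity) (by norm_num) hc,
          ← ENNReal.ofReal_mul (exp_pos 1).le, show (-(1 / 2) : ℝ) + 1 = 1 / 2 by norm_num,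
          ← sqrt_eq_rpow, sqrt_mul (by positivity)]
        congr 1
        field_simp

lemma exists_mul_log_le_of_eventually {f : ℝ → ℝ} {a c r₁ : ℝ} (ha : 0 < a) (hc : 0 < c)
    (hr₁ : 0 ≤ r₁) (hlog : ∀ᶠ r in atTop, a * log r ≤ f r) (hfc : ∀ r, r₁ < r → c ≤ f r) :
    ∃ b > 0, ∀ r, r₁ < r → b * log r ≤ f r := by
  obtain ⟨R, hR⟩ := eventually_atTop.mp hlog
  set R' := max R 2
  have hlogR' : 0 < log R' := log_pos (by simp [R'])
  have hb : 0 < min a (c / log R') := lt_min ha (div_pos hc hlogR')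
  refine ⟨min a (c / log R'), hb, fun r hr ↦ ?_⟩
  have hr0 : 0 < r := hr₁.trans_lt hr
  rcases le_or_gt R' r with h | h
  · have hlogr : 0 ≤ log r := log_nonneg (by linarith [le_max_right R 2])
    calc min a (c / log R') * log r ≤ a * log r := by gcongr; exact min_le_left _ _
      _ ≤ f r := hR r ((le_max_left R 2).trans h)
  · calc min a (c / log R') * log r ≤ min a (c / log R') * log R' :=
          mul_le_mul_of_nonneg_left (log_le_log hr0 h.le) hb.le
        _ ≤ c / log R' * log R' := mul_le_mul_of_nonneg_right (min_le_right _ _) hlogR'.le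
        _ = c := div_mul_cancel₀ c hlogR'.ne'
        _ ≤ f r := hfc r hr

lemma lintegral_Ioi_rpow_mul_exp_neg_le {f : ℝ → ℝ} {b c r₁ t : ℝ} (hb : 0 < b) (hr₁ : 0 < r₁)
    (hlog : ∀ r, r₁ < r → b * log r ≤ f r) (hfc : ∀ r, r₁ < r → c ≤ f r) (ht : 1 / b ≤ t) :
    ∫⁻ r in Ioi r₁, ENNReal.ofReal (r ^ (-(1 / 2) : ℝ) * exp (-(t * f r))) ≤
      ENNReal.ofReal (2 * r₁ ^ (-(1 / 2) : ℝ) * exp (c / b) * exp (-(c * t))) := by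
  have hpt : ∀ r ∈ Ioi r₁, ENNReal.ofReal (r ^ (-(1 / 2) : ℝ) * exp (-(t * f r))) ≤
      ENNReal.ofReal (exp (c / b) * exp (-(c * t))) * ENNReal.ofReal (r ^ (-(3 / 2) : ℝ)) := by
    intro r hr
    have hr0 : 0 < r := hr₁.trans hr
    -- `t f(r) = (t - 1/b) f(r) + f(r)/b ≥ (t - 1/b) c + log r`
    have hexp : -(t * f r) ≤ c / b - c * t - log r := by
      have h1 : (t - 1 / b) * c ≤ (t - 1 / b) * f r :=
        mul_le_mul_of_nonneg_left (hfc r hr) (by linarith)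
      have h2 : log r ≤ 1 / b * f r := by
        rw [one_div_mul_eq_div, le_div_iff₀ hb, mul_comm]; exact hlog r hr
      linear_combination h1 + h2
    rw [← ENNReal.ofReal_mul (by positivity)]
    apply ENNReal.ofReal_le_ofReal
    calc r ^ (-(1 / 2) : ℝ) * exp (-(t * f r))
        ≤ r ^ (-(1 / 2) : ℝ) * exp (c / b - c * t - log r) := by gcongr
      _ = exp (c / b) * exp (-(c * t)) * r ^ (-(3 / 2) : ℝ) := by
        rw [sub_eq_add_neg, exp_add, exp_neg (log r), exp_log hr0, sub_eq_add_neg, exp_add,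
          show (-(3 / 2) : ℝ) = -(1 / 2) + -1 by norm_num, rpow_add hr0, rpow_neg_one]
        ring
  calc _ ≤ ∫⁻ r in Ioi r₁,
        ENNReal.ofReal (exp (c / b) * exp (-(c * t))) * ENNReal.ofReal (r ^ (-(3 / 2) : ℝ)) :=
        setLIntegral_mono' measurableSet_Ioi hpt
    _ = ENNReal.ofReal (exp (c / b) * exp (-(c * t))) *
          ENNReal.ofReal (2 * r₁ ^ (-(1 / 2) : ℝ)) := by
        rw [lintegral_const_mul' _ _ ENNReal.ofReal_ne_top,
          lintegral_Ioi_rpow_of_lt (by norm_num) hr₁, show (-(3 / 2) : ℝ) + 1 = -(1 / 2) by norm_num]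
        congr 2
        ring
    _ = _ := by rw [← ENNReal.ofReal_mul (by positivity)]; ring_nf

lemma eventually_mul_exp_neg_le_sqrt {h : ℝ → ℝ} {m c A : ℝ} {β : ℕ} (hm : 0 < m) (hc : 0 < c)
    (hh : ∀ᶠ t in atTop, m ≤ t ^ β * h t) : ∀ᶠ t in atTop, A * exp (-(c * t)) ≤ √(h t) := by
  have hlim : Tendsto (fun t : ℝ ↦ A ^ 2 * (t ^ β * exp (-(2 * c) * t))) atTop (nhds 0) := by
    simpa using (tendsto_rpow_mul_exp_neg_mul_atTop_nhds_zero β (2 * c) (by positivity)).const_mul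
      (A ^ 2)
  filter_upwards [hlim.eventually (gt_mem_nhds hm), hh, eventually_gt_atTop 0] with t hlt hmt ht
  refine le_sqrt_of_sq_le (le_of_mul_le_mul_left ?_ (pow_pos ht β))
  calc t ^ β * (A * exp (-(c * t))) ^ 2 = A ^ 2 * (t ^ β * exp (-(2 * c) * t)) := by
        rw [mul_pow, ← exp_nat_mul]; ring_nf
    _ ≤ t ^ β * h t := hlt.le.trans hmt

theorem statement6_general (f g : ℝ → ℝ)
    (hmono : StrictMonoOn f (Set.Ioi 0))
    (hpos : ∀ r : ℝ, 0 < r → 0 < f r)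
    -- `g = f⁻¹ : (0,∞) → (0,∞)` is the inverse of `f`
    (hfg : ∀ s : ℝ, 0 < s → 0 < g s ∧ f (g s) = s)
    (hgf : ∀ r : ℝ, 0 < r → g (f r) = r)
    -- (i) `liminf_{r→∞} f(r)/log r > 0`
    (hi : ∃ a > (0 : ℝ), ∀ᶠ r in Filter.atTop, a ≤ f r / Real.log r)
    -- (iii) `limsup_{s→0+} f⁻¹(2s)/f⁻¹(s) < ∞`
    (hiii : ∃ K : ℝ, ∀ᶠ s in nhdsWithin 0 (Set.Ioi 0), g (2 * s) / g s ≤ K) :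
    ∃ C : ℝ, 0 < C ∧ ∃ t₀ : ℝ, 0 < t₀ ∧ ∀ t : ℝ, t₀ ≤ t →
      (∫⁻ r in Set.Ioi (0 : ℝ),
          ENNReal.ofReal (r ^ (-(1 / 2) : ℝ) * Real.exp (-(t * f r))))
        ≤ ENNReal.ofReal (C * Real.sqrt (g (1 / t))) := by
  obtain ⟨a, ha, hi⟩ := hi
  obtain ⟨K, hK⟩ := hiii
  obtain ⟨β, hβ, s₁, hs₁, hd⟩ := exists_doubling_of_eventually_div_le (fun s hs ↦ (hfg s hs).1) hK
  have hg : MonotoneOn g (Ioi 0) :=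
    hmono.monotoneOn_of_rightInvOn (fun s hs ↦ (hfg s hs).1) (fun s hs ↦ (hfg s hs).2)
  have hr₁ : 0 < g s₁ := (hfg s₁ hs₁).1
  have hfs₁ : ∀ r, g s₁ < r → s₁ ≤ f r := fun r hr ↦
    (hfg s₁ hs₁).2 ▸ hmono.monotoneOn hr₁ (hr₁.trans hr) hr.le
  obtain ⟨b, hb, hlog⟩ := exists_mul_log_le_of_eventually ha hs₁ hr₁.le
    (by filter_upwards [hi, eventually_gt_atTop 1] with r h hr
        exact (le_div_iff₀ (log_pos hr)).1 h) hfs₁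
  have htail_small := eventually_mul_exp_neg_le_sqrt (A := 2 * g s₁ ^ (-(1 / 2) : ℝ) * exp (s₁ / b))
    (by positivity) hs₁ (eventually_le_pow_mul_of_doubling hg (fun s hs ↦ (hfg s hs).1.le) hd hs₁)
  obtain ⟨T, hT⟩ := eventually_atTop.mp (htail_small.and (eventually_ge_atTop (1 / b)))
  set C₁ := exp 1 * √(2 ^ β) * (β * Gamma (β / 2))
  refine ⟨C₁ + 1, by positivity, max T 1, by positivity, fun t ht ↦ ?_⟩
  obtain ⟨hAt, htb⟩ := hT t (le_of_max_le_left ht)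
  rw [← Ioc_union_Ioi_eq_Ioi hr₁.le, add_one_mul,
    ENNReal.ofReal_add (by positivity) (by positivity)]
  exact (lintegral_union_le _ _ _).trans (add_le_add
    (lintegral_Ioc_rpow_mul_exp_neg_le_of_doubling hβ hmono hpos hg hfg hgf hd hs₁
      (zero_lt_one.trans_le (le_of_max_le_right ht)))
    ((lintegral_Ioi_rpow_mul_exp_neg_le hb hr₁ hlog hfs₁ htb).trans (ENNReal.ofReal_le_ofReal hAt)))

theorem statement6 (f g : ℝ → ℝ)
    (hcont : ContinuousOn f (Set.Ioi 0))
    (hmono : StrictMonoOn f (Set.Ioi 0))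
    (hpos : ∀ r : ℝ, 0 < r → 0 < f r)
    (hf0 : Filter.Tendsto f (nhdsWithin 0 (Set.Ioi 0)) (nhds 0))
    (hfinf : Filter.Tendsto f Filter.atTop Filter.atTop)
    -- `g = f⁻¹ : (0,∞) → (0,∞)` is the inverse of `f`
    (hfg : ∀ s : ℝ, 0 < s → 0 < g s ∧ f (g s) = s)
    (hgf : ∀ r : ℝ, 0 < r → g (f r) = r)
    -- (i) `liminf_{r→∞} f(r)/log r > 0`
    (hi : ∃ a > (0 : ℝ), ∀ᶠ r in Filter.atTop, a ≤ f r / Real.log r)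
    -- (ii) `liminf_{r→0+} f(r)·|log r| < ∞`
    (hii : ∃ M : ℝ, ∃ᶠ r in nhdsWithin 0 (Set.Ioi 0), f r * |Real.log r| ≤ M)
    -- (iii) `limsup_{s→0+} f⁻¹(2s)/f⁻¹(s) < ∞`
    (hiii : ∃ K : ℝ, ∀ᶠ s in nhdsWithin 0 (Set.Ioi 0), g (2 * s) / g s ≤ K) :
    ∃ C : ℝ, 0 < C ∧ ∃ t₀ : ℝ, 0 < t₀ ∧ ∀ t : ℝ, t₀ ≤ t →
      (∫⁻ r in Set.Ioi (0 : ℝ),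
          ENNReal.ofReal (r ^ (-(1 / 2) : ℝ) * Real.exp (-(t * f r))))
        ≤ ENNReal.ofReal (C * Real.sqrt (g (1 / t))) :=
  statement6_general f g hmono hpos hfg hgf hi hiii
end

section
/- Let f : (0,∞) → [0,∞) be nondecreasing. Then the following are equivalent: (a) there exists t₀ > 0 such that ∫₀^∞ r^{−1/2} e^{−t₀ f(r)} dr < ∞; (b) liminf_{r→∞} f(r)/log r > 0. Moreover, if (b) holds then ∫₀^∞ r^{−1/2} e^{−t f(r)} dr < ∞ for all sufficiently large t > 0. -/
open MeasureTheory Real Set Filter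
open scoped RealInnerProductSpace ENNReal

private lemma aux_part2 (f : ℝ → ℝ)
    (hnonneg : ∀ r : ℝ, 0 < r → 0 ≤ f r)
    (h : ∃ a > (0 : ℝ), ∀ᶠ r in Filter.atTop, a ≤ f r / Real.log r) :
    ∃ T : ℝ, 0 < T ∧ ∀ t : ℝ, T ≤ t →
        (∫⁻ r in Set.Ioi (0 : ℝ),
          ENNReal.ofReal (r ^ (-(1 / 2) : ℝ) * Real.exp (-(t * f r)))) < ⊤ := by
  obtain ⟨a, ha, hev⟩ := h
  obtain ⟨R₀, hR₀⟩ := Filter.eventually_atTop.1 hev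
  set R : ℝ := max R₀ 2 with hRdef
  have hR2 : (2:ℝ) ≤ R := le_max_right _ _
  have hRpos : (0:ℝ) < R := by linarith
  refine ⟨2 / a, by positivity, fun t ht => ?_⟩
  have hta : 2 ≤ t * a := by
    rw [div_le_iff₀ ha] at ht; linarith
  have htpos : 0 < t := by nlinarith
  -- split the integral
  have hsub : Set.Ioi (0:ℝ) ⊆ Set.Ioc 0 R ∪ Set.Ioi R := by
    intro x hx
    rcases le_or_gt x R with h | h
    · exact Or.inl ⟨hx, h⟩
    · exact Or.inr h
  have hsplit :
      (∫⁻ r in Set.Ioi (0 : ℝ),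
          ENNReal.ofReal (r ^ (-(1 / 2) : ℝ) * Real.exp (-(t * f r))))
        ≤ (∫⁻ r in Set.Ioc (0:ℝ) R,
            ENNReal.ofReal (r ^ (-(1 / 2) : ℝ) * Real.exp (-(t * f r))))
          + ∫⁻ r in Set.Ioi R,
            ENNReal.ofReal (r ^ (-(1 / 2) : ℝ) * Real.exp (-(t * f r))) :=
    le_trans (lintegral_mono_set hsub) (lintegral_union_le _ _ _)
  have h1 : (∫⁻ r in Set.Ioc (0:ℝ) R,
      ENNReal.ofReal (r ^ (-(1 / 2) : ℝ) * Real.exp (-(t * f r)))) < ⊤ := by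
    have hb : ∀ r ∈ Set.Ioc (0:ℝ) R,
        ENNReal.ofReal (r ^ (-(1 / 2) : ℝ) * Real.exp (-(t * f r)))
          ≤ ENNReal.ofReal (r ^ (-(1 / 2) : ℝ)) := by
      intro r hr
      apply ENNReal.ofReal_le_ofReal
      have h1 : Real.exp (-(t * f r)) ≤ 1 := by
        rw [Real.exp_le_one_iff]
        have := hnonneg r hr.1
        nlinarith
      have h2 : (0:ℝ) ≤ r ^ (-(1 / 2) : ℝ) := Real.rpow_nonneg hr.1.le _
      nlinarith
    refine lt_of_le_of_lt (setLIntegral_mono' measurableSet_Ioc hb) ?_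
    have hint : IntegrableOn (fun r : ℝ => r ^ (-(1 / 2) : ℝ)) (Set.Ioc 0 R) := by
      have := (intervalIntegral.intervalIntegrable_rpow' (a := 0) (b := R) (r := (-(1/2) : ℝ)) (by norm_num)).1
      simpa using this
    exact hint.setLIntegral_lt_top
  have h2 : (∫⁻ r in Set.Ioi R,
      ENNReal.ofReal (r ^ (-(1 / 2) : ℝ) * Real.exp (-(t * f r)))) < ⊤ := by
    have hb : ∀ r ∈ Set.Ioi R,
        ENNReal.ofReal (r ^ (-(1 / 2) : ℝ) * Real.exp (-(t * f r)))
          ≤ ENNReal.ofReal (r ^ (-(5 / 2) : ℝ)) := by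
      intro r hr
      simp only [Set.mem_Ioi] at hr
      have hrpos : (0:ℝ) < r := lt_trans hRpos hr
      have hr1 : (1:ℝ) < r := by linarith
      have hlog : 0 < Real.log r := Real.log_pos hr1
      have hfr : a * Real.log r ≤ f r := by
        have := hR₀ r (le_trans (le_max_left _ _) hr.le)
        rw [le_div_iff₀ hlog] at this
        linarith
      have hexp : Real.exp (-(t * f r)) ≤ Real.exp (-(2 * Real.log r)) := by
        apply Real.exp_le_exp.2
        have h1 : 2 * Real.log r ≤ (t * a) * Real.log r := by nlinarith
        have h2 : (t * a) * Real.log r ≤ t * f r := by nlinarith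
        linarith
      have hrw : Real.exp (-(2 * Real.log r)) = r ^ (-(2:ℝ)) := by
        rw [Real.rpow_def_of_pos hrpos]; ring_nf
      apply ENNReal.ofReal_le_ofReal
      have h2nn : (0:ℝ) ≤ r ^ (-(1 / 2) : ℝ) := Real.rpow_nonneg hrpos.le _
      calc r ^ (-(1 / 2) : ℝ) * Real.exp (-(t * f r))
          ≤ r ^ (-(1 / 2) : ℝ) * (r ^ (-(2:ℝ))) := by
            rw [← hrw]; exact mul_le_mul_of_nonneg_left (hexp) h2nn
        _ = r ^ (-(5 / 2) : ℝ) := by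
            rw [← Real.rpow_add hrpos]; norm_num
    refine lt_of_le_of_lt (setLIntegral_mono' measurableSet_Ioi hb) ?_
    exact (integrableOn_Ioi_rpow_of_lt (by norm_num) hRpos).setLIntegral_lt_top
  exact lt_of_le_of_lt hsplit (by exact ENNReal.add_lt_top.2 ⟨h1, h2⟩)

theorem statement8 (f : ℝ → ℝ)
    (hmono : MonotoneOn f (Set.Ioi 0))
    (hnonneg : ∀ r : ℝ, 0 < r → 0 ≤ f r) :
    ((∃ t₀ > (0 : ℝ),
        (∫⁻ r in Set.Ioi (0 : ℝ),
          ENNReal.ofReal (r ^ (-(1 / 2) : ℝ) * Real.exp (-(t₀ * f r)))) < ⊤)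
      ↔ (∃ a > (0 : ℝ), ∀ᶠ r in Filter.atTop, a ≤ f r / Real.log r))
    ∧
    ((∃ a > (0 : ℝ), ∀ᶠ r in Filter.atTop, a ≤ f r / Real.log r) →
      ∃ T : ℝ, 0 < T ∧ ∀ t : ℝ, T ≤ t →
        (∫⁻ r in Set.Ioi (0 : ℝ),
          ENNReal.ofReal (r ^ (-(1 / 2) : ℝ) * Real.exp (-(t * f r)))) < ⊤) := by
  constructor
  · constructor
    · -- (a) → (b)
      rintro ⟨t₀, ht₀, hI⟩
      set I := ∫⁻ r in Set.Ioi (0 : ℝ),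
          ENNReal.ofReal (r ^ (-(1 / 2) : ℝ) * Real.exp (-(t₀ * f r))) with hIdef
      set C : ℝ := I.toReal + 1 with hCdef
      have hCpos : 0 < C := by positivity
      -- key bound: for r ≥ 1, (2r)^{-1/2} e^{-t₀ f(2r)} * r ≤ C
      have key : ∀ r : ℝ, 1 ≤ r →
          (2*r) ^ (-(1/2) : ℝ) * Real.exp (-(t₀ * f (2*r))) * r ≤ C := by
        intro r hr
        have hrpos : (0:ℝ) < r := by linarith
        set c : ℝ := (2*r) ^ (-(1/2) : ℝ) * Real.exp (-(t₀ * f (2*r))) with hcdef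
        have hcnn : 0 ≤ c := by positivity
        have hlow : ∀ s ∈ Set.Ioc r (2*r),
            ENNReal.ofReal c ≤ ENNReal.ofReal (s ^ (-(1 / 2) : ℝ) * Real.exp (-(t₀ * f s))) := by
          intro s hs
          apply ENNReal.ofReal_le_ofReal
          have hspos : (0:ℝ) < s := lt_trans hrpos hs.1
          have h1 : (2*r) ^ (-(1/2) : ℝ) ≤ s ^ (-(1/2) : ℝ) :=
            Real.rpow_le_rpow_of_nonpos hspos hs.2 (by norm_num)
          have h2 : Real.exp (-(t₀ * f (2*r))) ≤ Real.exp (-(t₀ * f s)) := by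
            apply Real.exp_le_exp.2
            have hfle : f s ≤ f (2*r) := hmono hspos (by positivity : (0:ℝ) < 2*r) hs.2
            nlinarith
          have := Real.rpow_nonneg (by positivity : (0:ℝ) ≤ 2*r) (-(1/2) : ℝ)
          exact mul_le_mul h1 h2 (Real.exp_nonneg _) (Real.rpow_nonneg hspos.le _)
        have hlint : ENNReal.ofReal c * ENNReal.ofReal r
            ≤ ∫⁻ s in Set.Ioc r (2*r),
                ENNReal.ofReal (s ^ (-(1 / 2) : ℝ) * Real.exp (-(t₀ * f s))) := by
          have hvol : volume (Set.Ioc r (2*r)) = ENNReal.ofReal r := by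
            rw [Real.volume_Ioc]; congr 1; ring
          calc ENNReal.ofReal c * ENNReal.ofReal r
              = ∫⁻ _ in Set.Ioc r (2*r), ENNReal.ofReal c := by
                rw [setLIntegral_const, hvol]
            _ ≤ _ := setLIntegral_mono' measurableSet_Ioc hlow
        have hle : ENNReal.ofReal (c * r) ≤ I := by
          rw [ENNReal.ofReal_mul hcnn]
          refine le_trans hlint ?_
          exact lintegral_mono_set (fun x hx => lt_trans hrpos hx.1)
        have := (ENNReal.ofReal_le_iff_le_toReal hI.ne).1 hle
        calc c * r ≤ I.toReal := this
          _ ≤ C := by simp [hCdef]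
      -- derive bound on exp(-(t₀ f R))
      refine ⟨1 / (4 * t₀), by positivity, ?_⟩
      set K : ℝ := Real.log (4 * C) with hKdef
      rw [Filter.eventually_atTop]
      refine ⟨max (Real.exp (4 * K)) 2 + 1, fun R hR => ?_⟩
      have hRe : Real.exp (4 * K) < R := by
        calc Real.exp (4*K) ≤ max (Real.exp (4 * K)) 2 := le_max_left _ _
          _ < R := by linarith
      have hR2 : (2:ℝ) < R := by
        have := le_max_right (Real.exp (4 * K)) 2; linarith
      have hRpos : (0:ℝ) < R := by linarith
      have hr1 : (1:ℝ) ≤ R / 2 := by linarith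
      have hkey := key (R/2) hr1
      have h2r : 2 * (R / 2) = R := by ring
      rw [h2r] at hkey
      -- hkey : R^{-1/2} * exp(-(t₀ f R)) * (R/2) ≤ C
      have hRhalf : R ^ (-(1/2) : ℝ) * R = R ^ ((1/2) : ℝ) := by
        rw [← Real.rpow_add_one hRpos.ne']; norm_num
      have hexpbound : Real.exp (-(t₀ * f R)) * R ^ ((1/2) : ℝ) ≤ 2 * C := by
        have h0 : R ^ (-(1/2) : ℝ) * Real.exp (-(t₀ * f R)) * (R/2)
            = Real.exp (-(t₀ * f R)) * (R ^ (-(1/2) : ℝ) * R) / 2 := by ring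
        rw [h0, hRhalf] at hkey
        linarith
      -- so exp(-(t₀ f R)) ≤ 2C R^{-1/2} ≤ 4C R^{-1/2}
      have hRhalfpos : (0:ℝ) < R ^ ((1/2) : ℝ) := Real.rpow_pos_of_pos hRpos _
      have hlogR : 0 < Real.log R := Real.log_pos (by linarith)
      have hK4 : 4 * K ≤ Real.log R := by
        calc 4 * K = Real.log (Real.exp (4*K)) := (Real.log_exp _).symm
          _ ≤ Real.log R := Real.log_le_log (Real.exp_pos _) hRe.le
      -- take logs
      have hexp2 : Real.exp (-(t₀ * f R)) ≤ (4 * C) * R ^ (-(1/2) : ℝ) := by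
        calc Real.exp (-(t₀ * f R)) ≤ 4 * C / R ^ ((1/2) : ℝ) := by
              rw [le_div_iff₀ hRhalfpos]; linarith
          _ = (4 * C) * R ^ (-(1/2) : ℝ) := by
              rw [Real.rpow_neg hRpos.le]; ring
      have hlogle : -(t₀ * f R) ≤ K - (1/2) * Real.log R := by
        have hpos : (0:ℝ) < (4 * C) * R ^ (-(1/2) : ℝ) := by positivity
        have := (Real.le_log_iff_exp_le hpos).2 hexp2
        rw [Real.log_mul (by positivity) (by positivity),
          Real.log_rpow hRpos] at this
        linarith
      -- conclude
      rw [le_div_iff₀ hlogR]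
      have hfR : (1/4) * Real.log R ≤ t₀ * f R := by linarith
      rw [div_mul_eq_mul_div, div_le_iff₀ (by positivity : (0:ℝ) < 4 * t₀)]
      nlinarith
    · -- (b) → (a)
      intro h
      obtain ⟨T, hT, hall⟩ := aux_part2 f hnonneg h
      exact ⟨T, hT, hall T le_rfl⟩
  · exact aux_part2 f hnonneg
end

section
/- Let d ≥ 1, α ∈ (0,2), c₀ > 0 and t > 0. Let μ be a probability measure on ℝ^d with a density p with respect to Lebesgue measure satisfying p(z) ≥ c₀ min( t^{−d/α} , t |z|^{−d−α} ) for all z ≠ 0. Then there exists a constant c > 0 depending only on c₀, d and α such that for all x, y ∈ ℝ^d with x_i < y_i for every coordinate i and with t ≥ max_{1≤i≤d} (y_i − x_i)^α: ‖(μ ∗ δ_x) − (μ ∗ δ_y)‖_var ≥ c |y − x| t^{−1/α}. (This shows the upper bound C|x−y| t^{−1/α} for rotationally invariant α-stable processes is sharp, since their transition densities satisfy the stated two-sided bound.) -/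
open MeasureTheory Real Set Filter
open scoped RealInnerProductSpace ENNReal

/-!
Test the two shifted laws on the half-space `{z | z i ≤ x i}`, where `i` maximises `y i - x i =: h`:
the difference of the masses is the `μ`-mass of the slab `{w | x i - y i < w i ≤ 0}`. The slab
contains the box `(-h/√d, 0) × (0, t^{1/α}/√d)^{d-1}`, which lies in the ball of radius `t^{1/α}`,
where the density is at least `c₀ t^{-d/α}`. So the slab has mass at least
`c₀ t^{-d/α} · (h/√d) · (t^{1/α}/√d)^{d-1} = c₀ h t^{-1/α} / √d^d`, while `‖y - x‖ ≤ √d h`.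
-/

theorem le_tvDist_of_measurableSet {E : Type*} [MeasurableSpace E] (μ ν : Measure E) {A : Set E}
    (hA : MeasurableSet A) : μ A - ν A ≤ tvDist μ ν :=
  (le_iSup₂ (f := fun A (_ : MeasurableSet A) => μ A - ν A) A hA).trans le_self_add

theorem Real.rpow_neg_div_le_mul_rpow_neg_sub {t α d ρ : ℝ} (ht : 0 < t) (hα : 0 < α)
    (hd : 0 ≤ d) (hρ : 0 < ρ) (hρt : ρ ≤ t ^ (1 / α)) : t ^ (-d / α) ≤ t * ρ ^ (-d - α) :=
  calc t ^ (-d / α) = t ^ (1 + 1 / α * (-d - α)) := by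
        congr 1
        field_simp
        ring
    _ = t * (t ^ (1 / α)) ^ (-d - α) := by rw [rpow_add ht, rpow_one, rpow_mul ht.le]
    _ ≤ t * ρ ^ (-d - α) :=
        mul_le_mul_of_nonneg_left (rpow_le_rpow_of_nonpos hρ hρt (by linarith)) ht.le

theorem Real.rpow_neg_div_mul_rpow_one_div_pow {t α : ℝ} (ht : 0 < t) (hα : α ≠ 0) {d : ℕ}
    (hd : 1 ≤ d) : t ^ (-(d : ℝ) / α) * (t ^ (1 / α)) ^ (d - 1) = t ^ (-(1 / α)) := by
  rw [← rpow_natCast, ← rpow_mul ht.le, ← rpow_add ht, Nat.cast_sub hd]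
  congr 1
  field_simp
  ring

namespace EuclideanSpace

variable {ι : Type*} [Fintype ι]

theorem norm_le_sqrt_card_mul {z : EuclideanSpace ℝ ι} {s : ℝ} (h : ∀ j, |z j| ≤ s) :
    ‖z‖ ≤ √(Fintype.card ι) * s := by
  obtain hι | ⟨⟨j₀⟩⟩ := isEmpty_or_nonempty ι
  · simp [Subsingleton.elim z 0]
  have hs : 0 ≤ s := (abs_nonneg _).trans (h j₀)
  rw [EuclideanSpace.norm_eq, ← Real.sqrt_sq hs, ← Real.sqrt_mul (Nat.cast_nonneg _)]
  gcongr
  calc ∑ j, ‖z j‖ ^ 2 ≤ ∑ _j : ι, s ^ 2 := by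
        gcongr with j
        exact (Real.norm_eq_abs _).symm ▸ h j
    _ = Fintype.card ι * s ^ 2 := by simp

theorem volume_setOf_forall_mem_Ioo (a b : ι → ℝ) :
    volume {z : EuclideanSpace ℝ ι | ∀ j, z j ∈ Ioo (a j) (b j)} =
      ∏ j, ENNReal.ofReal (b j - a j) := by
  rw [← Real.volume_pi_Ioo, ← (PiLp.volume_preserving_ofLp ι).measure_preimage
    (MeasurableSet.univ_pi fun _ => measurableSet_Ioo).nullMeasurableSet]
  congr 1
  ext z
  simp

theorem map_add_setOf_apply_le (μ : Measure (EuclideanSpace ℝ ι)) (x : EuclideanSpace ℝ ι)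
    (i : ι) (a : ℝ) : μ.map (· + x) {z | z i ≤ a} = μ {w | w i ≤ a - x i} := by
  rw [Measure.map_apply (measurable_add_const x) (measurableSet_le (by fun_prop) (by fun_prop))]
  congr 1
  ext w
  simp [le_sub_iff_add_le]

theorem measure_slab_le_tvDist_map_add (μ : Measure (EuclideanSpace ℝ ι)) [IsFiniteMeasure μ]
    {x y : EuclideanSpace ℝ ι} {i : ι} (hxy : x i ≤ y i) :
    μ {w | x i - y i < w i ∧ w i ≤ 0} ≤ tvDist (μ.map (· + x)) (μ.map (· + y)) := by
  have hslab : {w : EuclideanSpace ℝ ι | x i - y i < w i ∧ w i ≤ 0} =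
      {w | w i ≤ 0} \ {w | w i ≤ x i - y i} := by
    ext w
    simp [and_comm]
  calc μ {w | x i - y i < w i ∧ w i ≤ 0} = μ {w | w i ≤ 0} - μ {w | w i ≤ x i - y i} := by
        rw [hslab, measure_sdiff (ofPred_subset_ofPred.2 fun w hw => hw.trans (by linarith))
          (measurableSet_le (by fun_prop) (by fun_prop)).nullMeasurableSet (measure_ne_top _ _)]
    _ = μ.map (· + x) {z | z i ≤ x i} - μ.map (· + y) {z | z i ≤ x i} := by
        rw [map_add_setOf_apply_le, map_add_setOf_apply_le, sub_self]
    _ ≤ tvDist (μ.map (· + x)) (μ.map (· + y)) :=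
        le_tvDist_of_measurableSet _ _ (measurableSet_le (by fun_prop) (by fun_prop))

theorem ofReal_mul_le_measure_slab [DecidableEq ι] {μ : Measure (EuclideanSpace ℝ ι)}
    {p : EuclideanSpace ℝ ι → ℝ} (hμ : μ = volume.withDensity fun z => ENNReal.ofReal (p z))
    {a m s : ℝ} (hm : 0 < m) (hms : m ≤ s)
    (hp : ∀ z, z ≠ 0 → ‖z‖ ≤ √(Fintype.card ι) * s → a ≤ p z) (i : ι) :
    ENNReal.ofReal (a * (m * s ^ (Fintype.card ι - 1))) ≤ μ {w | -m < w i ∧ w i ≤ 0} := by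
  have hs : 0 ≤ s := hm.le.trans hms
  set B := {z : EuclideanSpace ℝ ι |
    ∀ j, z j ∈ Ioo (if j = i then -m else 0) (if j = i then 0 else s)}
  have hB : MeasurableSet B := by
    simp only [B, ofPred_forall]
    exact MeasurableSet.iInter fun j => measurableSet_Ioo.preimage (by fun_prop)
  have hB_vol : volume B = ENNReal.ofReal (m * s ^ (Fintype.card ι - 1)) := by
    have hside : ∀ j ∈ Finset.univ.erase i,
        ENNReal.ofReal ((if j = i then 0 else s) - if j = i then -m else 0) = ENNReal.ofReal s :=
      fun j hj => by simp [Finset.ne_of_mem_erase hj]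
    rw [volume_setOf_forall_mem_Ioo, ← Finset.mul_prod_erase _ _ (Finset.mem_univ i),
      Finset.prod_congr rfl hside, Finset.prod_const, Finset.card_erase_of_mem (Finset.mem_univ i),
      Finset.card_univ, ENNReal.ofReal_mul hm.le, ENNReal.ofReal_pow hs]
    simp
  have hB_slab : B ⊆ {w | -m < w i ∧ w i ≤ 0} := fun z hz => by
    simpa using And.imp_right le_of_lt (by simpa using hz i)
  have hB_dens : ∀ z ∈ B, a ≤ p z := by
    intro z hz
    refine hp z ?_ (norm_le_sqrt_card_mul fun j => abs_le.2 ?_)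
    · rintro rfl
      simpa using hz i
    · have hzj := hz j
      split_ifs at hzj <;> constructor <;> linarith [hzj.1, hzj.2]
  calc ENNReal.ofReal (a * (m * s ^ (Fintype.card ι - 1))) = ∫⁻ _ in B, ENNReal.ofReal a := by
        rw [setLIntegral_const, hB_vol, ENNReal.ofReal_mul' (by positivity)]
    _ ≤ ∫⁻ z in B, ENNReal.ofReal (p z) :=
        setLIntegral_mono' hB fun z hz => ENNReal.ofReal_le_ofReal (hB_dens z hz)
    _ = μ B := by rw [hμ, withDensity_apply _ hB]
    _ ≤ μ {w | -m < w i ∧ w i ≤ 0} := measure_mono hB_slab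

end EuclideanSpace

theorem ofReal_le_measure_slab_of_stable_lower_bound {d : ℕ} (hd : 1 ≤ d) {α c₀ t h : ℝ}
    (hα : 0 < α) (hc₀ : 0 ≤ c₀) (ht : 0 < t) {μ : Measure (EuclideanSpace ℝ (Fin d))}
    {p : EuclideanSpace ℝ (Fin d) → ℝ} (hμ : μ = volume.withDensity fun z => ENNReal.ofReal (p z))
    (hp : ∀ z, z ≠ 0 → c₀ * min (t ^ (-(d : ℝ) / α)) (t * ‖z‖ ^ (-(d : ℝ) - α)) ≤ p z)
    (hh : 0 < h) (hht : h ≤ t ^ (1 / α)) (i : Fin d) :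
    ENNReal.ofReal (c₀ / √d ^ d * h * t ^ (-(1 / α))) ≤ μ {w | -(h / √d) < w i ∧ w i ≤ 0} := by
  have hq : 0 < √d := Real.sqrt_pos.2 (by exact_mod_cast hd)
  have hdens : ∀ z, z ≠ 0 → ‖z‖ ≤ √(Fintype.card (Fin d)) * (t ^ (1 / α) / √d) →
      c₀ * t ^ (-(d : ℝ) / α) ≤ p z := fun z hz hzr => by
    rw [Fintype.card_fin, mul_div_cancel₀ _ hq.ne'] at hzr
    refine le_trans (mul_le_mul_of_nonneg_left (le_min le_rfl ?_) hc₀) (hp z hz)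
    exact rpow_neg_div_le_mul_rpow_neg_sub ht hα (by positivity) (norm_pos_iff.2 hz) hzr
  have hslab := EuclideanSpace.ofReal_mul_le_measure_slab hμ (m := h / √d)
    (s := t ^ (1 / α) / √d) (by positivity) (div_le_div_of_nonneg_right hht hq.le) hdens i
  rw [Fintype.card_fin] at hslab
  convert hslab using 2
  have hqd : √d ^ d = √d ^ (d - 1) * √d := by rw [← pow_succ, Nat.sub_add_cancel hd]
  rw [← rpow_neg_div_mul_rpow_one_div_pow ht hα.ne' hd, hqd, div_pow]
  field_simp

theorem statement11_general (d : ℕ) (hd : 1 ≤ d) (α : ℝ) (hα : 0 < α)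
    (c₀ : ℝ) (hc₀ : 0 < c₀) :
    ∃ c : ℝ, 0 < c ∧ ∀ t : ℝ, 0 < t →
      ∀ (μ : Measure (EuclideanSpace ℝ (Fin d))) (p : EuclideanSpace ℝ (Fin d) → ℝ),
        IsProbabilityMeasure μ →
        μ = volume.withDensity (fun z => ENNReal.ofReal (p z)) →
        (∀ z : EuclideanSpace ℝ (Fin d), z ≠ 0 →
          c₀ * min (t ^ (-(d : ℝ) / α)) (t * ‖z‖ ^ (-(d : ℝ) - α)) ≤ p z) →
        ∀ x y : EuclideanSpace ℝ (Fin d),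
          (∀ i, x i < y i) → (∀ i, (y i - x i) ^ α ≤ t) →
          ENNReal.ofReal (c * ‖y - x‖ * t ^ (-(1 / α))) ≤
            tvDist (μ.map (· + x)) (μ.map (· + y)) := by
  refine ⟨c₀ / √d ^ (d + 1), by positivity, fun t ht μ p _ hμ hp x y hxy hts => ?_⟩
  obtain ⟨i, -, hi⟩ := Finset.exists_max_image Finset.univ (fun j => y j - x j)
    ⟨⟨0, hd⟩, Finset.mem_univ _⟩
  set h := y i - x i
  have hh : 0 < h := sub_pos.2 (hxy i)
  have hht : h ≤ t ^ (1 / α) := by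
    simpa only [one_div] using (le_rpow_inv_iff_of_pos hh.le ht.le hα).2 (hts i)
  have hyx : ‖y - x‖ ≤ √d * h := by
    simpa using EuclideanSpace.norm_le_sqrt_card_mul (z := y - x) fun j => by
      simpa [abs_of_pos (sub_pos.2 (hxy j))] using hi j (Finset.mem_univ j)
  have hq : 1 ≤ √d := Real.one_le_sqrt.2 (by exact_mod_cast hd)
  calc ENNReal.ofReal (c₀ / √d ^ (d + 1) * ‖y - x‖ * t ^ (-(1 / α)))
      ≤ ENNReal.ofReal (c₀ / √d ^ d * h * t ^ (-(1 / α))) := by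
        refine ENNReal.ofReal_le_ofReal (mul_le_mul_of_nonneg_right ?_ (by positivity))
        calc c₀ / √d ^ (d + 1) * ‖y - x‖ ≤ c₀ / √d ^ (d + 1) * (√d * h) := by gcongr
          _ = c₀ / √d ^ d * h := by field_simp; ring
    _ ≤ μ {w | -(h / √d) < w i ∧ w i ≤ 0} :=
        ofReal_le_measure_slab_of_stable_lower_bound hd hα hc₀.le ht hμ hp hh hht i
    _ ≤ μ {w | x i - y i < w i ∧ w i ≤ 0} := measure_mono fun w hw =>
        ⟨by linarith [hw.1, div_le_self hh.le hq], hw.2⟩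
    _ ≤ tvDist (μ.map (· + x)) (μ.map (· + y)) :=
        EuclideanSpace.measure_slab_le_tvDist_map_add μ (hxy i).le

theorem statement11 (d : ℕ) (hd : 1 ≤ d) (α : ℝ) (hα : 0 < α) (hα2 : α < 2)
    (c₀ : ℝ) (hc₀ : 0 < c₀) :
    ∃ c : ℝ, 0 < c ∧ ∀ t : ℝ, 0 < t →
      ∀ (μ : Measure (EuclideanSpace ℝ (Fin d))) (p : EuclideanSpace ℝ (Fin d) → ℝ),
        IsProbabilityMeasure μ →
        μ = volume.withDensity (fun z => ENNReal.ofReal (p z)) →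
        (∀ z : EuclideanSpace ℝ (Fin d), z ≠ 0 →
          c₀ * min (t ^ (-(d : ℝ) / α)) (t * ‖z‖ ^ (-(d : ℝ) - α)) ≤ p z) →
        ∀ x y : EuclideanSpace ℝ (Fin d),
          (∀ i, x i < y i) → (∀ i, (y i - x i) ^ α ≤ t) →
          ENNReal.ofReal (c * ‖y - x‖ * t ^ (-(1 / α))) ≤
            tvDist (μ.map (· + x)) (μ.map (· + y)) :=
  statement11_general d hd α hα c₀ hc₀
end
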